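/- For every N ∈ ℕ, the Galerkin–Euler drift b_N (a quadratic polynomial, hence smooth, vector field on the real vector space H_N) has vanishing divergence: for every ξ ∈ H_N the trace of the real Fréchet derivative Db_N(ξ), viewed as a real-linear endomorphism of H_N, equals 0. Consequently, since also ⟨b_N(ξ), ξ⟩ = 0 for all ξ, the Gaussian divergence div_{μ_N} b_N(ξ) := trace(Db_N(ξ)) − ⟨b_N(ξ), ξ⟩ vanishes identically. -/

import Mathlib

open MeasureTheory ProbabilityTheory RealInnerProductSpace

/-- `Λ_N = {k ∈ ℤ² ∖ {0} : max(|k₁|, |k₂|) ≤ N}`. -/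
noncomputable def Lam (N : ℕ) : Finset (ℤ × ℤ) :=
  (Finset.Icc (-(N : ℤ), -(N : ℤ)) ((N : ℤ), (N : ℤ))).erase (0, 0)

/-- The Galerkin–Euler drift, componentwise:
`b_N(ξ)_n = − ∑_{k ∈ Λ_N, n−k ∈ Λ_N} ((k^⊥ · n)/|k|²) ξ_k ξ_{n−k}`, where `k^⊥ = (k₂, −k₁)`. -/
noncomputable def bN (N : ℕ) (ξ : ℤ × ℤ → ℂ) (n : ℤ × ℤ) : ℂ :=
  -∑ k ∈ (Lam N).filter (fun k => n - k ∈ Lam N),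
    (((k.2 * n.1 - k.1 * n.2 : ℤ) : ℂ) / ((k.1 ^ 2 + k.2 ^ 2 : ℤ) : ℂ)) * ξ k * ξ (n - k)

/-- The ambient complex Euclidean space `ℂ^{Λ_N}`. -/
abbrev Amb (N : ℕ) := EuclideanSpace ℂ ↥(Lam N)

/-- `ℂ^{Λ_N}` as a real inner product space, with
`⟨ζ, ξ⟩ = Re ∑_{n ∈ Λ_N} ζ_n conj(ξ_n)`. -/
noncomputable instance (N : ℕ) : InnerProductSpace ℝ (Amb N) :=
  InnerProductSpace.rclikeToReal ℂ (Amb N)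

/-- `H_N = {ξ : Λ_N → ℂ : ξ_{−k} = conj (ξ_k)}`, a real subspace of `ℂ^{Λ_N}`. -/
def HNsub (N : ℕ) : Submodule ℝ (Amb N) where
  carrier := {ξ | ∀ (k : ↥(Lam N)) (h : -(k : ℤ × ℤ) ∈ Lam N),
    ξ ⟨-(k : ℤ × ℤ), h⟩ = (starRingEnd ℂ) (ξ k)}
  add_mem' := by
    intro a b ha hb k h
    simp only [PiLp.add_apply, ha k h, hb k h, map_add]
  zero_mem' := by
    intro k h
    simp
  smul_mem' := by
    intro c x hx k h
    simp only [PiLp.smul_apply, hx k h, Complex.real_smul, map_mul, Complex.conj_ofReal]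

/-- The finite-dimensional real inner product space `H_N`. -/
abbrev HN (N : ℕ) := ↥(HNsub N)

/-- A vector `ξ ∈ ℂ^{Λ_N}` extended by zero to a function on `ℤ²`. -/
noncomputable def extendA (N : ℕ) (ξ : Amb N) : ℤ × ℤ → ℂ := fun k =>
  if h : k ∈ Lam N then ξ ⟨k, h⟩ else 0

/-- The Galerkin–Euler drift as a map of `ℂ^{Λ_N}`. -/
noncomputable def bAmb (N : ℕ) (ξ : Amb N) : Amb N := WithLp.toLp 2 (fun n => bN N (extendA N ξ) ↑n)

/-- The Galerkin–Euler drift as a map of `H_N` (since `b_N` maps `H_N` into `H_N`,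
composing with the orthogonal projection onto `H_N` does not change it). -/
noncomputable def bHN (N : ℕ) (ξ : HN N) : HN N :=
  Submodule.orthogonalProjectionOnto (HNsub N) (bAmb N ↑ξ)

section Aux
variable {N : ℕ}

lemma mem_Lam_iff {k : ℤ × ℤ} : k ∈ Lam N ↔ k ≠ (0,0) ∧
    (-(N:ℤ) ≤ k.1 ∧ k.1 ≤ N) ∧ (-(N:ℤ) ≤ k.2 ∧ k.2 ≤ N) := by
  constructor
  · intro h
    rw [Lam, Finset.mem_erase, Finset.mem_Icc, Prod.le_def, Prod.le_def] at h
    exact ⟨h.1, ⟨h.2.1.1, h.2.2.1⟩, h.2.1.2, h.2.2.2⟩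
  · intro h
    rw [Lam, Finset.mem_erase, Finset.mem_Icc, Prod.le_def, Prod.le_def]
    exact ⟨h.1, ⟨h.2.1.1, h.2.2.1⟩, h.2.1.2, h.2.2.2⟩

lemma neg_mem_Lam {k : ℤ × ℤ} (h : k ∈ Lam N) : -k ∈ Lam N := by
  rw [mem_Lam_iff] at h ⊢
  obtain ⟨h0, ⟨h1, h2⟩, h3, h4⟩ := h
  refine ⟨fun hc => h0 ?_, ⟨by simp; omega, by simp; omega⟩, by simp; omega, by simp; omega⟩
  · have := congrArg Neg.neg hc; simpa using this

lemma ne_zero_of_mem_Lam {k : ℤ × ℤ} (h : k ∈ Lam N) : k ≠ (0,0) :=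
  (mem_Lam_iff.1 h).1

lemma normSq_ne_zero_of_mem_Lam {k : ℤ × ℤ} (h : k ∈ Lam N) :
    ((k.1 ^ 2 + k.2 ^ 2 : ℤ) : ℂ) ≠ 0 := by
  have hk := ne_zero_of_mem_Lam h
  have : k.1 ^ 2 + k.2 ^ 2 ≠ 0 := by
    rcases k with ⟨a, b⟩
    simp only [Prod.mk.injEq, ne_eq, not_and_or] at hk
    intro hc
    simp only at hc
    rcases hk with h | h <;> [ (apply h); (apply h) ] <;> nlinarith [sq_nonneg a, sq_nonneg b]
  exact_mod_cast this

lemma extendA_add (x y : Amb N) (m : ℤ × ℤ) :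
    extendA N (x + y) m = extendA N x m + extendA N y m := by
  unfold extendA; split <;> simp

lemma extendA_smul (c : ℂ) (x : Amb N) (m : ℤ × ℤ) :
    extendA N (c • x) m = c * extendA N x m := by
  unfold extendA; split <;> simp

lemma extendA_conj {ξ : Amb N} (hξ : ξ ∈ HNsub N) (m : ℤ × ℤ) :
    extendA N ξ (-m) = (starRingEnd ℂ) (extendA N ξ m) := by
  by_cases hm : m ∈ Lam N
  · have hm' : -m ∈ Lam N := neg_mem_Lam hm
    unfold extendA
    rw [dif_pos hm', dif_pos hm]
    exact hξ ⟨m, hm⟩ hm'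
  · have hm' : -m ∉ Lam N := fun hc => hm (by simpa using neg_mem_Lam hc)
    unfold extendA
    rw [dif_neg hm', dif_neg hm]
    simp

end Aux

section Bilin
variable (N : ℕ)

noncomputable def Bfun (ζ ξ : Amb N) : Amb N := WithLp.toLp 2 (fun n =>
  -∑ k ∈ (Lam N).filter (fun k => (n : ℤ × ℤ) - k ∈ Lam N),
    (((k.2 * (n:ℤ×ℤ).1 - k.1 * (n:ℤ×ℤ).2 : ℤ) : ℂ) / ((k.1 ^ 2 + k.2 ^ 2 : ℤ) : ℂ)) *
      extendA N ζ k * extendA N ξ ((n : ℤ × ℤ) - k))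

lemma bAmb_eq (ξ : Amb N) : bAmb N ξ = Bfun N ξ ξ := rfl

noncomputable def BL : Amb N →ₗ[ℂ] Amb N →ₗ[ℂ] Amb N :=
  LinearMap.mk₂ ℂ (Bfun N)
    (by
      intro x y ξ; ext n
      show Bfun N (x + y) ξ n = Bfun N x ξ n + Bfun N y ξ n
      simp only [Bfun, extendA_add, add_mul, mul_add, Finset.sum_add_distrib, neg_add])
    (by
      intro c x ξ; ext n
      show Bfun N (c • x) ξ n = (c • Bfun N x ξ) n
      simp only [Bfun, extendA_smul, PiLp.smul_apply, smul_eq_mul, Finset.mul_sum, mul_neg,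
        neg_inj]
      exact Finset.sum_congr rfl fun k _ => by ring)
    (by
      intro x ξ η; ext n
      show Bfun N x (ξ + η) n = Bfun N x ξ n + Bfun N x η n
      simp only [Bfun, extendA_add, mul_add, Finset.sum_add_distrib, neg_add])
    (by
      intro c x ξ; ext n
      show Bfun N x (c • ξ) n = (c • Bfun N x ξ) n
      simp only [Bfun, extendA_smul, PiLp.smul_apply, smul_eq_mul, Finset.mul_sum, mul_neg,
        neg_inj]
      exact Finset.sum_congr rfl fun k _ => by ring)

noncomputable def BC : Amb N →L[ℝ] Amb N →L[ℝ] Amb N :=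
  LinearMap.toContinuousLinearMap
  { toFun := fun x => LinearMap.toContinuousLinearMap ((BL N x).restrictScalars ℝ)
    map_add' := by intro a b; ext v; simp
    map_smul' := by intro c a; ext v; simp }

@[simp] lemma BC_apply (x v : Amb N) : BC N x v = Bfun N x v := by
  simp [BC]
  rfl

/-- The derivative of `bAmb` at `x`, as a continuous linear map. -/
noncomputable def DC (x : Amb N) : Amb N →L[ℝ] Amb N :=
  BC N x + (BC N).flip x

lemma hasFDerivAt_bAmb (x : Amb N) : HasFDerivAt (bAmb N) (DC N x) x := by
  have hB := (BC N).isBoundedBilinearMap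
  have hdiag : HasFDerivAt (fun v : Amb N => (v, v))
      ((ContinuousLinearMap.id ℝ (Amb N)).prod (ContinuousLinearMap.id ℝ (Amb N))) x :=
    ((ContinuousLinearMap.id ℝ (Amb N)).prod (ContinuousLinearMap.id ℝ (Amb N))).hasFDerivAt
  have h2 := HasFDerivAt.comp (f := fun v : Amb N => (v, v)) x (hB.hasFDerivAt (x, x)) hdiag
  have hfun : (fun p : Amb N × Amb N => BC N p.1 p.2) ∘ (fun v : Amb N => (v, v)) = bAmb N := by
    funext v
    show BC N v v = bAmb N v
    rw [bAmb_eq, BC_apply]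
  have hder : DC N x = (hB.deriv (x, x)).comp
      ((ContinuousLinearMap.id ℝ (Amb N)).prod (ContinuousLinearMap.id ℝ (Amb N))) := by
    ext v
    simp [DC, add_comm]
  rw [hfun] at h2
  rw [hder]
  exact h2

end Bilin

section Trace
variable (N : ℕ)

noncomputable def realBasis : Module.Basis (Fin 2 × ↥(Lam N)) ℝ (Amb N) :=
  Complex.basisOneI.smulTower (PiLp.basisFun 2 ℂ ↥(Lam N))

lemma trace_formula (L : Amb N →ₗ[ℝ] Amb N) :
    LinearMap.trace ℝ (Amb N) L =
      ∑ n : ↥(Lam N), (((L ((PiLp.basisFun 2 ℂ ↥(Lam N)) n)) n).re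
        + ((L (Complex.I • (PiLp.basisFun 2 ℂ ↥(Lam N)) n)) n).im) := by
  rw [LinearMap.trace_eq_matrix_trace ℝ (realBasis N) L, Matrix.trace]
  simp only [Matrix.diag, LinearMap.toMatrix_apply, Fintype.sum_prod_type, Fin.sum_univ_two,
    realBasis, Module.Basis.smulTower_apply, Module.Basis.smulTower_repr, PiLp.basisFun_repr,
    Complex.coe_basisOneI_repr, Complex.coe_basisOneI, Matrix.cons_val_zero, Matrix.cons_val_one,
    Matrix.head_cons, one_smul]
  rw [Finset.sum_add_distrib]

lemma trace_zero_of_clinear (L : Amb N →ₗ[ℂ] Amb N)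
    (h : ∀ n : ↥(Lam N), (L ((PiLp.basisFun 2 ℂ ↥(Lam N)) n)) n = 0) :
    LinearMap.trace ℝ (Amb N) (L.restrictScalars ℝ) = 0 := by
  rw [trace_formula]
  apply Finset.sum_eq_zero
  intro n _
  have h2 : L (Complex.I • (PiLp.basisFun 2 ℂ ↥(Lam N)) n)
      = Complex.I • L ((PiLp.basisFun 2 ℂ ↥(Lam N)) n) := map_smul L _ _
  simp only [LinearMap.coe_restrictScalars, h2, PiLp.smul_apply, h n, smul_eq_mul, mul_zero,
    Complex.zero_re, Complex.zero_im, add_zero]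

lemma trace_zero_of_conjlinear (L : Amb N →ₗ[ℝ] Amb N)
    (h : ∀ v, L (Complex.I • v) = (-Complex.I) • L v) :
    LinearMap.trace ℝ (Amb N) L = 0 := by
  rw [trace_formula]
  apply Finset.sum_eq_zero
  intro n _
  rw [h]
  simp only [PiLp.smul_apply, smul_eq_mul]
  set z := (L ((PiLp.basisFun 2 ℂ ↥(Lam N)) n)) n
  simp [Complex.mul_im]

end Trace

section Proj
variable (N : ℕ)

noncomputable def negE : ↥(Lam N) ≃ ↥(Lam N) where
  toFun n := ⟨-(n : ℤ × ℤ), neg_mem_Lam n.2⟩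
  invFun n := ⟨-(n : ℤ × ℤ), neg_mem_Lam n.2⟩
  left_inv n := by ext : 1; simp
  right_inv n := by ext : 1; simp

noncomputable def sigmaL : Amb N →ₗ[ℝ] Amb N where
  toFun v := WithLp.toLp 2 (fun n => (starRingEnd ℂ) (v (negE N n)))
  map_add' v w := by ext n; simp
  map_smul' r v := by
    ext n
    simp only [PiLp.smul_apply, RingHom.id_apply]
    rw [Complex.real_smul, Complex.real_smul, map_mul, Complex.conj_ofReal]

lemma sigmaL_apply (v : Amb N) (n : ↥(Lam N)) :
    sigmaL N v n = (starRingEnd ℂ) (v (negE N n)) := rfl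

lemma sigmaL_smul_I (v : Amb N) :
    sigmaL N (Complex.I • v) = (-Complex.I) • sigmaL N v := by
  ext n
  show (starRingEnd ℂ) ((Complex.I • v) (negE N n)) = ((-Complex.I) • sigmaL N v) n
  simp [sigmaL_apply, PiLp.smul_apply, mul_comm]

lemma mem_HNsub_iff {v : Amb N} :
    v ∈ HNsub N ↔ ∀ n : ↥(Lam N), v (negE N n) = (starRingEnd ℂ) (v n) := by
  constructor
  · intro hv n
    exact hv n (neg_mem_Lam n.2)
  · intro hv k h
    exact hv k

lemma negE_negE (n : ↥(Lam N)) : negE N (negE N n) = n := (negE N).left_inv n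

lemma inner_sigmaL (v w : Amb N) (hw : w ∈ HNsub N) :
    (inner ℝ (sigmaL N v) w : ℝ) = inner ℝ v w := by
  have h1 : (inner (𝕜 := ℂ) (sigmaL N v) w) = (starRingEnd ℂ) (inner (𝕜 := ℂ) v w) := by
    rw [PiLp.inner_apply, PiLp.inner_apply, map_sum]
    refine Fintype.sum_equiv (negE N) _ _ fun n => ?_
    simp only [RCLike.inner_apply, sigmaL_apply, Complex.conj_conj, map_mul]
    rw [(mem_HNsub_iff N).1 hw n, Complex.conj_conj]
  show Complex.re (inner (𝕜 := ℂ) (sigmaL N v) w) = Complex.re (inner (𝕜 := ℂ) v w)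
  rw [h1, Complex.conj_re]

lemma proj_eq (v : Amb N) :
    (Submodule.orthogonalProjectionOnto (HNsub N) v : Amb N) = (2⁻¹ : ℝ) • (v + sigmaL N v) := by
  rw [← Submodule.starProjection_apply]
  apply Submodule.eq_starProjection_of_mem_of_inner_eq_zero
  · rw [mem_HNsub_iff]
    intro n
    show ((2⁻¹:ℝ) • (v + sigmaL N v)) (negE N n) = _
    simp only [PiLp.smul_apply, PiLp.add_apply, sigmaL_apply, negE_negE]
    rw [Complex.real_smul, Complex.real_smul]
    rw [map_mul, Complex.conj_ofReal, map_add, Complex.conj_conj]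
    ring
  · intro w hw
    have hsub : v - (2⁻¹ : ℝ) • (v + sigmaL N v) = (2⁻¹ : ℝ) • (v - sigmaL N v) := by
      rw [smul_add, smul_sub, sub_add_eq_sub_sub]
      congr 1
      rw [sub_eq_iff_eq_add, ← add_smul]
      norm_num
    rw [hsub, real_inner_smul_left, inner_sub_left, inner_sigmaL N v w hw]
    ring

lemma proj_lin :
    (HNsub N).subtype ∘ₗ (Submodule.orthogonalProjectionOnto (HNsub N) : Amb N →L[ℝ] HNsub N).toLinearMap
      = (2⁻¹ : ℝ) • (LinearMap.id + sigmaL N) := by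
  refine LinearMap.ext fun v => ?_
  have := proj_eq N v
  simpa using this

end Proj

section Main1
variable (N : ℕ)

lemma extendA_basisFun (n : ↥(Lam N)) (m : ℤ × ℤ) (hm : m ≠ ↑n) :
    extendA N ((PiLp.basisFun 2 ℂ ↥(Lam N)) n) m = 0 := by
  unfold extendA
  split
  · next h =>
    have hne : (⟨m, h⟩ : ↥(Lam N)) ≠ n := fun hc => hm (congrArg Subtype.val hc)
    rw [PiLp.basisFun_apply]
    show Pi.single n 1 (⟨m, h⟩ : ↥(Lam N)) = 0
    rw [Pi.single_apply, if_neg hne]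
  · rfl

lemma Bfun_diag₁ (x : Amb N) (n : ↥(Lam N)) :
    Bfun N x ((PiLp.basisFun 2 ℂ ↥(Lam N)) n) n = 0 := by
  show -∑ k ∈ (Lam N).filter (fun k => (n : ℤ × ℤ) - k ∈ Lam N), _ = 0
  rw [neg_eq_zero]
  apply Finset.sum_eq_zero
  intro k hk
  rw [Finset.mem_filter] at hk
  have hne : ((n : ℤ × ℤ) - k) ≠ (n : ℤ × ℤ) := by
    intro hc
    have hk0 : k = 0 := by
      have := sub_eq_self.mp hc
      exact this
    exact ne_zero_of_mem_Lam hk.1 hk0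
  rw [extendA_basisFun N n _ hne, mul_zero]

lemma Bfun_diag₂ (x : Amb N) (n : ↥(Lam N)) :
    Bfun N ((PiLp.basisFun 2 ℂ ↥(Lam N)) n) x n = 0 := by
  show -∑ k ∈ (Lam N).filter (fun k => (n : ℤ × ℤ) - k ∈ Lam N), _ = 0
  rw [neg_eq_zero]
  apply Finset.sum_eq_zero
  intro k hk
  rw [Finset.mem_filter] at hk
  have hne : k ≠ (n : ℤ × ℤ) := by
    intro hc
    subst hc
    exact ne_zero_of_mem_Lam hk.2 (by simp; rfl)
  rw [extendA_basisFun N n _ hne, mul_zero, zero_mul]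

lemma DC_coe (x : Amb N) : ((DC N x) : Amb N →ₗ[ℝ] Amb N)
    = (BL N x + (BL N).flip x).restrictScalars ℝ := by
  refine LinearMap.ext fun v => ?_
  show DC N x v = _
  simp only [DC, ContinuousLinearMap.add_apply, ContinuousLinearMap.flip_apply, BC_apply,
    LinearMap.coe_restrictScalars, LinearMap.add_apply, LinearMap.flip_apply, BL,
    LinearMap.mk₂_apply]

lemma DC_smul_I (x : Amb N) (v : Amb N) :
    DC N x (Complex.I • v) = Complex.I • DC N x v := by
  have h := congrFun (congrArg (fun (f : Amb N →ₗ[ℝ] Amb N) => (f : Amb N → Amb N)) (DC_coe N x))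
  have h1 := h (Complex.I • v)
  have h2 := h v
  simp only [LinearMap.coe_restrictScalars] at h1 h2
  show (DC N x : Amb N →ₗ[ℝ] Amb N) (Complex.I • v) = Complex.I • (DC N x : Amb N →ₗ[ℝ] Amb N) v
  rw [h1, h2, _root_.map_smul]

lemma fderiv_bHN (ξ : HN N) :
    fderiv ℝ (bHN N) ξ = ((Submodule.orthogonalProjectionOnto (HNsub N)) : Amb N →L[ℝ] HN N).comp
      ((DC N ↑ξ).comp (HNsub N).subtypeL) := by
  refine HasFDerivAt.fderiv ?_
  have h1 : HasFDerivAt (fun ζ : HN N => ((HNsub N).subtypeL ζ)) ((HNsub N).subtypeL) ξ :=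
    ((HNsub N).subtypeL).hasFDerivAt
  have h2 : HasFDerivAt (bAmb N) (DC N ↑ξ) ((HNsub N).subtypeL ξ) := hasFDerivAt_bAmb N ↑ξ
  have hcomp := HasFDerivAt.comp ξ h2 h1
  have h3 : HasFDerivAt (Submodule.orthogonalProjectionOnto (HNsub N) : Amb N →L[ℝ] HN N)
      ((Submodule.orthogonalProjectionOnto (HNsub N)) : Amb N →L[ℝ] HN N)
      ((bAmb N ∘ fun ζ : HN N => ((HNsub N).subtypeL ζ)) ξ) :=
    ((Submodule.orthogonalProjectionOnto (HNsub N)) : Amb N →L[ℝ] HN N).hasFDerivAt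
  have h4 := HasFDerivAt.comp ξ h3 hcomp
  exact h4

lemma trace_fderiv_zero (ξ : HN N) :
    LinearMap.trace ℝ (HN N) (fderiv ℝ (bHN N) ξ : HN N →ₗ[ℝ] HN N) = 0 := by
  rw [fderiv_bHN]
  have e1 : ((((Submodule.orthogonalProjectionOnto (HNsub N)) : Amb N →L[ℝ] HN N).comp
        ((DC N ↑ξ).comp (HNsub N).subtypeL) : HN N →L[ℝ] HN N) : HN N →ₗ[ℝ] HN N)
      = (((Submodule.orthogonalProjectionOnto (HNsub N) : Amb N →L[ℝ] HN N).toLinearMap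
          ∘ₗ ((DC N ↑ξ) : Amb N →ₗ[ℝ] Amb N)) ∘ₗ (HNsub N).subtype) := rfl
  rw [e1, LinearMap.trace_comp_comm']
  have e2 : (HNsub N).subtype ∘ₗ ((Submodule.orthogonalProjectionOnto (HNsub N) : Amb N →L[ℝ] HN N).toLinearMap
        ∘ₗ ((DC N ↑ξ) : Amb N →ₗ[ℝ] Amb N))
      = ((2⁻¹ : ℝ) • (LinearMap.id + sigmaL N)) ∘ₗ ((DC N ↑ξ) : Amb N →ₗ[ℝ] Amb N) := by
    rw [← LinearMap.comp_assoc, proj_lin]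
  rw [e2, LinearMap.smul_comp, LinearMap.add_comp, LinearMap.id_comp, _root_.map_smul, map_add]
  have t1 : LinearMap.trace ℝ (Amb N) ((DC N ↑ξ) : Amb N →ₗ[ℝ] Amb N) = 0 := by
    rw [DC_coe]
    apply trace_zero_of_clinear
    intro n
    show (Bfun N ↑ξ ((PiLp.basisFun 2 ℂ ↥(Lam N)) n)
        + Bfun N ((PiLp.basisFun 2 ℂ ↥(Lam N)) n) ↑ξ) n = 0
    rw [PiLp.add_apply, Bfun_diag₁, Bfun_diag₂, add_zero]
  have t2 : LinearMap.trace ℝ (Amb N)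
      ((sigmaL N) ∘ₗ ((DC N ↑ξ) : Amb N →ₗ[ℝ] Amb N)) = 0 := by
    apply trace_zero_of_conjlinear
    intro v
    show sigmaL N (DC N ↑ξ (Complex.I • v)) = (-Complex.I) • sigmaL N (DC N ↑ξ v)
    rw [DC_smul_I, sigmaL_smul_I]
  rw [t1, t2]
  simp

end Main1

section Main2
variable (N : ℕ)

noncomputable def GG (η : ℤ × ℤ → ℂ) (p : (ℤ × ℤ) × (ℤ × ℤ)) : ℂ :=
  (((p.1.2 * (p.1 + p.2).1 - p.1.1 * (p.1 + p.2).2 : ℤ) : ℂ) / ((p.1.1 ^ 2 + p.1.2 ^ 2 : ℤ) : ℂ))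
    * η p.1 * η p.2 * η (-p.1 - p.2)

noncomputable def PP : Finset ((ℤ × ℤ) × (ℤ × ℤ)) := ((Lam N) ×ˢ (Lam N)).filter (fun p => p.1 + p.2 ∈ Lam N)

lemma mem_PP {p : (ℤ × ℤ) × (ℤ × ℤ)} :
    p ∈ PP N ↔ p.1 ∈ Lam N ∧ p.2 ∈ Lam N ∧ p.1 + p.2 ∈ Lam N := by
  simp [PP, Finset.mem_filter, Finset.mem_product, and_assoc]

set_option maxHeartbeats 1000000 in
lemma coeff_six (x1 x2 y1 y2 : ℂ) (hda : x1 ^ 2 + x2 ^ 2 ≠ 0) (hdb : y1 ^ 2 + y2 ^ 2 ≠ 0)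
    (hdc : (x1 + y1) ^ 2 + (x2 + y2) ^ 2 ≠ 0) :
    (x2 * (x1 + y1) - x1 * (x2 + y2)) / (x1 ^ 2 + x2 ^ 2)
      + (y2 * (x1 + y1) - y1 * (x2 + y2)) / (y1 ^ 2 + y2 ^ 2)
      + (y2 * -x1 - y1 * -x2) / (y1 ^ 2 + y2 ^ 2)
      + ((-x2 - y2) * -x1 - (-x1 - y1) * -x2) / ((x1 + y1) ^ 2 + (x2 + y2) ^ 2)
      + (x2 * -y1 - x1 * -y2) / (x1 ^ 2 + x2 ^ 2)
      + ((-x2 - y2) * -y1 - (-x1 - y1) * -y2) / ((x1 + y1) ^ 2 + (x2 + y2) ^ 2) = 0 := by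
  ring

set_option maxHeartbeats 2000000 in
lemma six_term (η : ℤ × ℤ → ℂ) {a b : ℤ × ℤ} (ha : a ∈ Lam N) (hb : b ∈ Lam N)
    (hab : a + b ∈ Lam N) :
    GG η (a, b) + GG η (b, a) + GG η (b, -a - b) + GG η (-a - b, b)
      + GG η (a, -a - b) + GG η (-a - b, a) = 0 := by
  have hda := normSq_ne_zero_of_mem_Lam ha
  have hdb := normSq_ne_zero_of_mem_Lam hb
  have hdab := normSq_ne_zero_of_mem_Lam hab
  unfold GG
  simp only []
  rw [show (-b - a : ℤ × ℤ) = -a - b from by ring]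
  rw [show (-b - (-a - b) : ℤ × ℤ) = a from by ring]
  rw [show (-(-a - b) - b : ℤ × ℤ) = a from by ring]
  rw [show (-a - (-a - b) : ℤ × ℤ) = b from by ring]
  rw [show (-(-a - b) - a : ℤ × ℤ) = b from by ring]
  rw [show (b + a : ℤ × ℤ) = a + b from by ring]
  rw [show (b + (-a - b) : ℤ × ℤ) = -a from by ring]
  rw [show (-a - b + b : ℤ × ℤ) = -a from by ring]
  rw [show (a + (-a - b) : ℤ × ℤ) = -b from by ring]
  rw [show (-a - b + a : ℤ × ℤ) = -b from by ring]
  obtain ⟨a1, a2⟩ := a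
  obtain ⟨b1, b2⟩ := b
  simp only [Prod.mk_add_mk, Prod.neg_mk, Prod.mk_sub_mk, Prod.fst_add, Prod.snd_add,
    Prod.fst_neg, Prod.snd_neg, Prod.fst_sub, Prod.snd_sub] at hda hdb hdab ⊢
  rw [show ((-a1 - b1) ^ 2 + (-a2 - b2) ^ 2 : ℤ) = ((a1 + b1) ^ 2 + (a2 + b2) ^ 2 : ℤ) from by
    ring]
  push_cast at hda hdb hdab ⊢
  have key := coeff_six (a1 : ℂ) a2 b1 b2 hda hdb hdab
  refine Eq.trans (b := ((((a2 : ℂ) * ((a1 : ℂ) + b1) - (a1 : ℂ) * ((a2 : ℂ) + b2)) / ((a1 : ℂ) ^ 2 + (a2 : ℂ) ^ 2)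
      + ((b2 : ℂ) * ((a1 : ℂ) + b1) - (b1 : ℂ) * ((a2 : ℂ) + b2)) / ((b1 : ℂ) ^ 2 + (b2 : ℂ) ^ 2)
      + ((b2 : ℂ) * -(a1 : ℂ) - (b1 : ℂ) * -(a2 : ℂ)) / ((b1 : ℂ) ^ 2 + (b2 : ℂ) ^ 2)
      + ((-(a2 : ℂ) - b2) * -(a1 : ℂ) - (-(a1 : ℂ) - b1) * -(a2 : ℂ)) / (((a1 : ℂ) + b1) ^ 2 + ((a2 : ℂ) + b2) ^ 2)
      + ((a2 : ℂ) * -(b1 : ℂ) - (a1 : ℂ) * -(b2 : ℂ)) / ((a1 : ℂ) ^ 2 + (a2 : ℂ) ^ 2)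
      + ((-(a2 : ℂ) - b2) * -(b1 : ℂ) - (-(a1 : ℂ) - b1) * -(b2 : ℂ)) / (((a1 : ℂ) + b1) ^ 2 + ((a2 : ℂ) + b2) ^ 2))
      * (η (a1, a2) * η (b1, b2) * η (-a1 - b1, -a2 - b2)))) ?_ ?_
  · ring
  · rw [key, zero_mul]

lemma sum_PP_reindex (η : ℤ × ℤ → ℂ) (τ τinv : (ℤ × ℤ) × (ℤ × ℤ) → (ℤ × ℤ) × (ℤ × ℤ))
    (hmem : ∀ p ∈ PP N, τ p ∈ PP N) (hmem' : ∀ p ∈ PP N, τinv p ∈ PP N)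
    (hinv : ∀ p ∈ PP N, τinv (τ p) = p) (hinv' : ∀ p ∈ PP N, τ (τinv p) = p) :
    ∑ p ∈ PP N, GG η (τ p) = ∑ p ∈ PP N, GG η p :=
  Finset.sum_nbij' τ τinv hmem hmem' hinv hinv' (fun _ _ => rfl)

lemma neg_sub_mem_PP {p : (ℤ × ℤ) × (ℤ × ℤ)} (hp : p ∈ PP N) : (-p.1 - p.2) ∈ Lam N := by
  rw [mem_PP] at hp
  rw [show (-p.1 - p.2 : ℤ × ℤ) = -(p.1 + p.2) from by ring]
  exact neg_mem_Lam hp.2.2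

set_option maxHeartbeats 1000000 in
lemma sum_PP_zero (η : ℤ × ℤ → ℂ) : ∑ p ∈ PP N, GG η p = 0 := by
  classical
  have hswap : ∑ p ∈ PP N, GG η ((p.2, p.1) : (ℤ × ℤ) × (ℤ × ℤ)) = ∑ p ∈ PP N, GG η p := by
    refine sum_PP_reindex N η _ (fun p => (p.2, p.1)) ?_ ?_ ?_ ?_ <;> intro p hp
    · rw [mem_PP] at hp ⊢
      exact ⟨hp.2.1, hp.1, by rw [add_comm]; exact hp.2.2⟩
    · rw [mem_PP] at hp ⊢
      exact ⟨hp.2.1, hp.1, by rw [add_comm]; exact hp.2.2⟩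
    · rfl
    · rfl
  have hrho : ∑ p ∈ PP N, GG η ((p.2, -p.1 - p.2) : (ℤ × ℤ) × (ℤ × ℤ)) = ∑ p ∈ PP N, GG η p := by
    refine sum_PP_reindex N η _ (fun p => (-p.1 - p.2, p.1)) ?_ ?_ ?_ ?_ <;> intro p hp
    · have h3 := neg_sub_mem_PP N hp
      rw [mem_PP] at hp ⊢
      refine ⟨hp.2.1, h3, ?_⟩
      rw [show (p.2 + (-p.1 - p.2) : ℤ × ℤ) = -p.1 from by ring]
      exact neg_mem_Lam hp.1
    · have h3 := neg_sub_mem_PP N hp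
      rw [mem_PP] at hp ⊢
      refine ⟨h3, hp.1, ?_⟩
      rw [show ((-p.1 - p.2) + p.1 : ℤ × ℤ) = -p.2 from by ring]
      exact neg_mem_Lam hp.2.1
    · obtain ⟨p1, p2⟩ := p
      rw [Prod.mk.injEq]
      exact ⟨by ring, by ring⟩
    · obtain ⟨p1, p2⟩ := p
      rw [Prod.mk.injEq]
      exact ⟨by ring, by ring⟩
  have hrho2 : ∑ p ∈ PP N, GG η ((-p.1 - p.2, p.1) : (ℤ × ℤ) × (ℤ × ℤ)) = ∑ p ∈ PP N, GG η p := by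
    refine sum_PP_reindex N η _ (fun p => (p.2, -p.1 - p.2)) ?_ ?_ ?_ ?_ <;> intro p hp
    · have h3 := neg_sub_mem_PP N hp
      rw [mem_PP] at hp ⊢
      refine ⟨h3, hp.1, ?_⟩
      rw [show ((-p.1 - p.2) + p.1 : ℤ × ℤ) = -p.2 from by ring]
      exact neg_mem_Lam hp.2.1
    · have h3 := neg_sub_mem_PP N hp
      rw [mem_PP] at hp ⊢
      refine ⟨hp.2.1, h3, ?_⟩
      rw [show (p.2 + (-p.1 - p.2) : ℤ × ℤ) = -p.1 from by ring]
      exact neg_mem_Lam hp.1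
    · obtain ⟨p1, p2⟩ := p
      rw [Prod.mk.injEq]
      exact ⟨by ring, by ring⟩
    · obtain ⟨p1, p2⟩ := p
      rw [Prod.mk.injEq]
      exact ⟨by ring, by ring⟩
  have hm4 : ∑ p ∈ PP N, GG η ((-p.1 - p.2, p.2) : (ℤ × ℤ) × (ℤ × ℤ)) = ∑ p ∈ PP N, GG η p := by
    refine sum_PP_reindex N η _ (fun p => (-p.1 - p.2, p.2)) ?_ ?_ ?_ ?_ <;> intro p hp
    · have h3 := neg_sub_mem_PP N hp
      rw [mem_PP] at hp ⊢
      refine ⟨h3, hp.2.1, ?_⟩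
      rw [show ((-p.1 - p.2) + p.2 : ℤ × ℤ) = -p.1 from by ring]
      exact neg_mem_Lam hp.1
    · have h3 := neg_sub_mem_PP N hp
      rw [mem_PP] at hp ⊢
      refine ⟨h3, hp.2.1, ?_⟩
      rw [show ((-p.1 - p.2) + p.2 : ℤ × ℤ) = -p.1 from by ring]
      exact neg_mem_Lam hp.1
    · obtain ⟨p1, p2⟩ := p
      rw [Prod.mk.injEq]
      exact ⟨by ring, by ring⟩
    · obtain ⟨p1, p2⟩ := p
      rw [Prod.mk.injEq]
      exact ⟨by ring, by ring⟩
  have hm5 : ∑ p ∈ PP N, GG η ((p.1, -p.1 - p.2) : (ℤ × ℤ) × (ℤ × ℤ)) = ∑ p ∈ PP N, GG η p := by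
    refine sum_PP_reindex N η _ (fun p => (p.1, -p.1 - p.2)) ?_ ?_ ?_ ?_ <;> intro p hp
    · have h3 := neg_sub_mem_PP N hp
      rw [mem_PP] at hp ⊢
      refine ⟨hp.1, h3, ?_⟩
      rw [show (p.1 + (-p.1 - p.2) : ℤ × ℤ) = -p.2 from by ring]
      exact neg_mem_Lam hp.2.1
    · have h3 := neg_sub_mem_PP N hp
      rw [mem_PP] at hp ⊢
      refine ⟨hp.1, h3, ?_⟩
      rw [show (p.1 + (-p.1 - p.2) : ℤ × ℤ) = -p.2 from by ring]
      exact neg_mem_Lam hp.2.1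
    · obtain ⟨p1, p2⟩ := p
      rw [Prod.mk.injEq]
      exact ⟨by ring, by ring⟩
    · obtain ⟨p1, p2⟩ := p
      rw [Prod.mk.injEq]
      exact ⟨by ring, by ring⟩
  have h6 : ∀ p ∈ PP N,
      GG η p + GG η (p.2, p.1) + GG η (p.2, -p.1 - p.2) + GG η (-p.1 - p.2, p.2)
        + GG η (p.1, -p.1 - p.2) + GG η (-p.1 - p.2, p.1) = 0 := by
    intro p hp
    rw [mem_PP] at hp
    have h := six_term N η hp.1 hp.2.1 hp.2.2
    obtain ⟨p1, p2⟩ := p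
    exact h
  have htot : ∑ p ∈ PP N,
      (GG η p + GG η (p.2, p.1) + GG η (p.2, -p.1 - p.2) + GG η (-p.1 - p.2, p.2)
        + GG η (p.1, -p.1 - p.2) + GG η (-p.1 - p.2, p.1)) = 0 :=
    Finset.sum_eq_zero h6
  rw [Finset.sum_add_distrib, Finset.sum_add_distrib, Finset.sum_add_distrib,
    Finset.sum_add_distrib, Finset.sum_add_distrib, hswap, hrho, hrho2, hm4, hm5] at htot
  have h66 : (6 : ℂ) * ∑ p ∈ PP N, GG η p = 0 := by
    rw [← htot]; ring
  have h60 : (6 : ℂ) ≠ 0 := by norm_num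
  exact (mul_eq_zero.mp h66).resolve_left h60

lemma Z_zero (η : ℤ × ℤ → ℂ) : ∑ n ∈ Lam N, bN N η n * η (-n) = 0 := by
  classical
  have hZ : ∑ n ∈ Lam N, bN N η n * η (-n)
      = -∑ q ∈ ((Lam N) ×ˢ (Lam N)).filter (fun q => q.1 - q.2 ∈ Lam N),
          ((((q.2.2 * q.1.1 - q.2.1 * q.1.2 : ℤ) : ℂ) / ((q.2.1 ^ 2 + q.2.2 ^ 2 : ℤ) : ℂ))
            * η q.2 * η (q.1 - q.2)) * η (-q.1) := by
    rw [Finset.sum_filter, Finset.sum_product]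
    simp only [bN, neg_mul, Finset.sum_mul]
    rw [← Finset.sum_neg_distrib]
    refine Finset.sum_congr rfl fun n _ => ?_
    rw [Finset.sum_filter]
  rw [hZ]
  have hbij : ∑ q ∈ ((Lam N) ×ˢ (Lam N)).filter (fun q => q.1 - q.2 ∈ Lam N),
        ((((q.2.2 * q.1.1 - q.2.1 * q.1.2 : ℤ) : ℂ) / ((q.2.1 ^ 2 + q.2.2 ^ 2 : ℤ) : ℂ))
          * η q.2 * η (q.1 - q.2)) * η (-q.1)
      = ∑ p ∈ PP N, GG η p := by
    refine Finset.sum_nbij' (fun q => (q.2, q.1 - q.2)) (fun p => (p.1 + p.2, p.1))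
      ?_ ?_ ?_ ?_ ?_
    · intro q hq
      rw [Finset.mem_filter, Finset.mem_product] at hq
      rw [mem_PP]
      refine ⟨hq.1.2, hq.2, ?_⟩
      rw [show (q.2 + (q.1 - q.2) : ℤ × ℤ) = q.1 from by ring]
      exact hq.1.1
    · intro p hp
      rw [mem_PP] at hp
      rw [Finset.mem_filter, Finset.mem_product]
      refine ⟨⟨hp.2.2, hp.1⟩, ?_⟩
      rw [show ((p.1 + p.2) - p.1 : ℤ × ℤ) = p.2 from by ring]
      exact hp.2.1
    · intro q _
      obtain ⟨q1, q2⟩ := q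
      rw [Prod.mk.injEq]
      exact ⟨by ring, by ring⟩
    · intro p _
      obtain ⟨p1, p2⟩ := p
      rw [Prod.mk.injEq]
      exact ⟨by ring, by ring⟩
    · intro q _
      unfold GG
      simp only []
      rw [show (q.2 + (q.1 - q.2) : ℤ × ℤ) = q.1 from by ring]
      rw [show (-q.2 - (q.1 - q.2) : ℤ × ℤ) = -q.1 from by ring]
  rw [hbij, sum_PP_zero, neg_zero]

lemma inner_bHN (ξ : HN N) : (inner ℝ (bHN N ξ) ξ : ℝ) = 0 := by
  have h0 : (inner ℝ (bHN N ξ) ξ : ℝ)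
      = inner (𝕜 := ℝ) (Submodule.orthogonalProjectionOnto (HNsub N) (bAmb N ↑ξ)) ξ := rfl
  rw [h0, Submodule.inner_orthogonalProjectionOnto_eq_of_mem_right]
  show Complex.re (inner (𝕜 := ℂ) (bAmb N (ξ : Amb N)) ((ξ : Amb N))) = 0
  set η : ℤ × ℤ → ℂ := extendA N (ξ : Amb N) with hη_def
  have hη : ∀ m, η (-m) = (starRingEnd ℂ) (η m) := fun m => extendA_conj ξ.2 m
  have hsum : (inner (𝕜 := ℂ) (bAmb N (ξ : Amb N)) ((ξ : Amb N)))
      = ∑ n ∈ Lam N, (starRingEnd ℂ) (bN N η n) * η n := by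
    rw [PiLp.inner_apply, ← Finset.sum_coe_sort (Lam N)
      (fun n => (starRingEnd ℂ) (bN N η n) * η n)]
    refine Finset.sum_congr rfl fun n _ => ?_
    have hcoord : η ↑n = (ξ : Amb N) n := by
      rw [hη_def]
      unfold extendA
      rw [dif_pos n.2]
    rw [RCLike.inner_apply]
    rw [← hcoord]
    exact mul_comm _ _
  have hconj : ∑ n ∈ Lam N, (starRingEnd ℂ) (bN N η n) * η n
      = (starRingEnd ℂ) (∑ n ∈ Lam N, bN N η n * η (-n)) := by
    rw [map_sum]
    refine Finset.sum_congr rfl fun n _ => ?_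
    rw [map_mul, hη n, Complex.conj_conj]
  rw [hsum, hconj, Z_zero, map_zero, Complex.zero_re]

end Main2

theorem stmt1 (N : ℕ) (ξ : HN N) :
    LinearMap.trace ℝ (HN N) (fderiv ℝ (bHN N) ξ : HN N →ₗ[ℝ] HN N) = 0 ∧
    LinearMap.trace ℝ (HN N) (fderiv ℝ (bHN N) ξ : HN N →ₗ[ℝ] HN N) - ⟪bHN N ξ, ξ⟫ = 0 := by
  refine ⟨trace_fderiv_zero N ξ, ?_⟩
  rw [trace_fderiv_zero N ξ, inner_bHN N ξ, sub_zero]
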